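/- arXiv:1009.1798 — 5 statements merged into one kernel-verified Lean document; each statement's English description precedes it below -/
import Mathlib

section
/- Let A be a finite abelian group, χ: A × A → S¹ a symmetric bilinear form, and μ: A → S¹ a quadratic map associated with χ. Let A⊥ = {a ∈ A : χ(a,b) = 1 for all b ∈ A}. If the restriction of μ to A⊥ is not identically 1, then the Gauss sum γ(μ) = |A|^{-1/2}|A⊥|^{-1/2} ∑_{a∈A} μ(a) equals 0. -/
/-! Translating by an element `a₀` of the annihilator multiplies each term of the Gauss sum by
`μ a₀`, so the sum `S` satisfies `S = μ a₀ * S`; as `μ a₀ ≠ 1`, this forces `S = 0`. -/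

theorem Fintype.sum_eq_zero_of_apply_add_eq_mul {A R : Type*} [AddCommGroup A] [Fintype A]
    [CommRing R] [NoZeroDivisors R] {f : A → R} {a₀ : A}
    (hf : ∀ a, f (a + a₀) = f a * f a₀) (h : f a₀ ≠ 1) : ∑ a, f a = 0 := by
  have hinv : ∑ a, f a * f a₀ = ∑ a, f a :=
    Fintype.sum_equiv (Equiv.addRight a₀) _ _ fun a => (hf a).symm
  have hfix : (f a₀ - 1) * ∑ a, f a = 0 := by
    rw [sub_mul, one_mul, mul_comm, Finset.sum_mul, hinv, sub_self]
  exact (mul_eq_zero.mp hfix).resolve_left (sub_ne_zero.mpr h)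

theorem apply_add_eq_mul_of_forall_eq_one {A R : Type*} [AddCommMonoid A] [CommMonoid R]
    {χ : A → A → R} {μ : A → R} (hμ : ∀ a b, μ (a + b) = χ a b * μ a * μ b) {a₀ : A}
    (ha₀ : ∀ b, χ a₀ b = 1) (a : A) : μ (a + a₀) = μ a * μ a₀ := by
  rw [add_comm, hμ, ha₀, one_mul, mul_comm]

theorem gauss_sum_eq_zero_general
    {A : Type*} [AddCommGroup A] [Fintype A]
    (χ : A → A → ℂ) (μ : A → ℂ)
    (hμ : ∀ a b, μ (a + b) = χ a b * μ a * μ b)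
    (hne : ∃ a : A, (∀ b, χ a b = 1) ∧ μ a ≠ 1) :
    ((Real.sqrt (Fintype.card A) : ℂ))⁻¹ *
      ((Real.sqrt (Nat.card {a : A // ∀ b, χ a b = 1}) : ℂ))⁻¹ *
      (∑ a : A, μ a) = 0 := by
  obtain ⟨a₀, ha₀, hμa₀⟩ := hne
  rw [Fintype.sum_eq_zero_of_apply_add_eq_mul (apply_add_eq_mul_of_forall_eq_one hμ ha₀) hμa₀,
    mul_zero]

/-- If the restriction of a quadratic map `μ` (associated with a symmetric
bilinear form `χ` on a finite abelian group `A`) to the annihilator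
`A⊥ = {a | χ(a,b) = 1 ∀ b}` is not identically `1`, then the normalized Gauss sum
`γ(μ) = |A|^{-1/2} |A⊥|^{-1/2} ∑_{a ∈ A} μ a` equals `0`. -/
theorem gauss_sum_eq_zero
    {A : Type*} [AddCommGroup A] [Fintype A]
    (χ : A → A → ℂ) (μ : A → ℂ)
    (hχ_unit : ∀ a b, ‖χ a b‖ = 1)
    (hχ_symm : ∀ a b, χ a b = χ b a)
    (hχ_bil : ∀ a b c, χ (a + b) c = χ a c * χ b c)
    (hμ_unit : ∀ a, ‖μ a‖ = 1)
    (hμ : ∀ a b, μ (a + b) = χ a b * μ a * μ b)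
    (hne : ∃ a : A, (∀ b, χ a b = 1) ∧ μ a ≠ 1) :
    ((Real.sqrt (Fintype.card A) : ℂ))⁻¹ *
      ((Real.sqrt (Nat.card {a : A // ∀ b, χ a b = 1}) : ℂ))⁻¹ *
      (∑ a : A, μ a) = 0 :=
  gauss_sum_eq_zero_general χ μ hμ hne
end

section
/- Let A be a finite abelian group, χ: A × A → S¹ a symmetric bilinear form, and μ: A → S¹ a quadratic map associated with χ. If μ(a) = 1 for all a in the annihilator A⊥ = {a : χ(a,b)=1 ∀b}, then the normalized Gauss sum γ(μ) = |A|^{-1/2}|A⊥|^{-1/2} ∑_{a∈A} μ(a) has absolute value 1. -/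
/-!
Expanding `|∑ μ|² = ∑_{a,b} μ(a) conj μ(b)` and substituting `a = b + c`, the quadratic relation
`μ(b + c) conj μ(b) = χ(b, c) μ(c)` turns the double sum into `∑_c μ(c) ∑_b χ(b, c)`. The inner sum
is a character sum, equal to `|A|` on the annihilator and `0` off it, and `μ = 1` on the
annihilator, so `|∑ μ|² = |A| |A⊥|`.
-/

open Finset ComplexConjugate

section Bicharacter

variable {A R : Type*} [AddCommGroup A] [CommRing R] [IsDomain R] {χ : A → A → R}

lemma apply_zero_left_eq_one (hχ_ne : ∀ a b, χ a b ≠ 0)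
    (hχ_bil : ∀ a b c, χ (a + b) c = χ a c * χ b c) (c : A) : χ 0 c = 1 :=
  (mul_eq_left₀ (hχ_ne 0 c)).mp (by rw [← hχ_bil, add_zero])

lemma sum_apply_left_eq_ite [Fintype A] (hχ_ne : ∀ a b, χ a b ≠ 0)
    (hχ_bil : ∀ a b c, χ (a + b) c = χ a c * χ b c) (c : A) [Decidable (∀ b, χ b c = 1)] :
    ∑ b, χ b c = if ∀ b, χ b c = 1 then (Fintype.card A : R) else 0 := by
  classical
  let ψ : AddChar A R :=
    { toFun := (χ · c)
      map_zero_eq_one' := apply_zero_left_eq_one hχ_ne hχ_bil c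
      map_add_eq_mul' := fun a b => hχ_bil a b c }
  simpa [ψ, AddChar.ext_iff] using ψ.sum_eq_ite

end Bicharacter

lemma norm_sum_sq_eq_card_mul_card_annihilator {A : Type*} [AddCommGroup A] [Fintype A]
    {χ : A → A → ℂ} {μ : A → ℂ} (hχ_ne : ∀ a b, χ a b ≠ 0) (hχ_symm : ∀ a b, χ a b = χ b a)
    (hχ_bil : ∀ a b c, χ (a + b) c = χ a c * χ b c) (hμ_unit : ∀ a, ‖μ a‖ = 1)
    (hμ : ∀ a b, μ (a + b) = χ a b * μ a * μ b)
    (htriv : ∀ a : A, (∀ b, χ a b = 1) → μ a = 1) :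
    ‖∑ a, μ a‖ ^ 2 = Fintype.card A * Nat.card {a : A // ∀ b, χ a b = 1} := by
  classical
  have hμ_conj (b : A) : μ b * conj (μ b) = 1 := by simp [Complex.mul_conj', hμ_unit]
  have hshift (b c : A) : μ (b + c) * conj (μ b) = χ b c * μ c := by
    linear_combination (hμ b c) * conj (μ b) + χ b c * μ c * hμ_conj b
  have hsum (c : A) : μ c * ∑ b, χ b c = if ∀ b, χ c b = 1 then (Fintype.card A : ℂ) else 0 := by
    rw [sum_apply_left_eq_ite hχ_ne hχ_bil c]
    by_cases hc : ∀ b, χ c b = 1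
    · rw [if_pos hc, if_pos fun b => (hχ_symm b c).trans (hc b), htriv c hc, one_mul]
    · rw [if_neg hc, if_neg fun h => hc fun b => (hχ_symm c b).trans (h b), mul_zero]
  apply Complex.ofReal_injective
  push_cast
  rw [← Complex.mul_conj', map_sum, sum_mul_sum, sum_comm]
  calc ∑ b, ∑ a, μ a * conj (μ b)
      = ∑ b, ∑ c, μ (b + c) * conj (μ b) :=
        sum_congr rfl fun b _ => (Equiv.sum_comp (Equiv.addLeft b) _).symm
    _ = ∑ c, μ c * ∑ b, χ b c := by
        simp only [hshift, mul_sum]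
        rw [sum_comm]
        simp only [mul_comm]
    _ = Fintype.card A * Nat.card {a : A // ∀ b, χ a b = 1} := by
        rw [sum_congr rfl fun c _ => hsum c, sum_ite, sum_const_zero, add_zero, sum_const,
          nsmul_eq_mul, Nat.card_eq_fintype_card, Fintype.card_subtype, mul_comm]

/-- If a quadratic map `μ` associated with a symmetric bilinear form `χ` on
a finite abelian group `A` is identically `1` on the annihilator
`A⊥ = {a | χ(a,b) = 1 ∀ b}`, then the normalized Gauss sum
`γ(μ) = |A|^{-1/2} |A⊥|^{-1/2} ∑_{a ∈ A} μ a` has absolute value `1`. -/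
theorem gauss_sum_abs_one
    {A : Type*} [AddCommGroup A] [Fintype A]
    (χ : A → A → ℂ) (μ : A → ℂ)
    (hχ_unit : ∀ a b, ‖χ a b‖ = 1)
    (hχ_symm : ∀ a b, χ a b = χ b a)
    (hχ_bil : ∀ a b c, χ (a + b) c = χ a c * χ b c)
    (hμ_unit : ∀ a, ‖μ a‖ = 1)
    (hμ : ∀ a b, μ (a + b) = χ a b * μ a * μ b)
    (htriv : ∀ a : A, (∀ b, χ a b = 1) → μ a = 1) :
    ‖(((Real.sqrt (Fintype.card A) : ℂ))⁻¹ *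
      ((Real.sqrt (Nat.card {a : A // ∀ b, χ a b = 1}) : ℂ))⁻¹ *
      (∑ a : A, μ a))‖ = 1 := by
  have hχ_ne (a b : A) : χ a b ≠ 0 := norm_ne_zero_iff.mp (by simp [hχ_unit])
  have hcard_pos : 0 < Fintype.card A := Fintype.card_pos
  have hann_pos : 0 < Nat.card {a : A // ∀ b, χ a b = 1} :=
    Nat.card_pos_iff.mpr ⟨⟨⟨0, apply_zero_left_eq_one hχ_ne hχ_bil⟩⟩, inferInstance⟩
  have hnorm : ‖∑ a, μ a‖ = √(Fintype.card A) * √(Nat.card {a : A // ∀ b, χ a b = 1}) := by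
    rw [← Real.sqrt_mul (Nat.cast_nonneg _), ← norm_sum_sq_eq_card_mul_card_annihilator hχ_ne
      hχ_symm hχ_bil hμ_unit hμ htriv, Real.sqrt_sq (norm_nonneg _)]
  rw [norm_mul, norm_mul, norm_inv, norm_inv, Complex.norm_real, Complex.norm_real, hnorm,
    Real.norm_of_nonneg (Real.sqrt_nonneg _), Real.norm_of_nonneg (Real.sqrt_nonneg _)]
  field_simp
end

section
/- Let (A, χ) be a bicharacter pair, μ₀ a fixed quadratic map associated with χ, and k an integer. Then for every quadratic map μ associated with χ there is a unique c ∈ A with μ(a) = χ(a,c)·μ₀(a) for all a ∈ A, and one has ζ_k(χ) = γ(μ₀^{-k}) · (γ(μ₀))^k, where ζ_k(χ) = |A|^{-1/2}|A_k|^{-1/2} ∑_{μ ∈ Q_χ} γ(μ)^k. -/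
/-- A bicharacter on a finite abelian group: a non-degenerate symmetric bilinear pairing
with values in the unit circle `S¹ ⊂ ℂ`; non-degeneracy means the adjoint map
`A → Hom(A, S¹)` is bijective. -/
def IsBicharacter {A : Type*} [AddCommGroup A] [Fintype A] (χ : A → A → ℂ) : Prop :=
  (∀ a b, ‖χ a b‖ = 1) ∧ (∀ a b, χ a b = χ b a) ∧
  (∀ a b c, χ (a + b) c = χ a c * χ b c) ∧
  Function.Injective (fun a : A => (fun b => χ a b)) ∧
  (∀ f : A → ℂ, (∀ a, ‖f a‖ = 1) → (∀ a b, f (a + b) = f a * f b) →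
    ∃ a : A, f = fun b => χ a b)

/-- The set `Q_χ` of quadratic maps associated with `χ`. -/
def QuadMaps {A : Type*} [AddCommGroup A] [Fintype A] (χ : A → A → ℂ) : Set (A → ℂ) :=
  {μ | (∀ a, ‖μ a‖ = 1) ∧ ∀ a b, μ (a + b) = χ a b * μ a * μ b}

/-!
Fixing `μ₀ ∈ Q_χ`, the quotient `μ / μ₀` of any `μ ∈ Q_χ` is a character of `A`, so by
non-degeneracy of `χ` it is `χ(·, c)` for exactly one `c`: thus `c ↦ χ(·, c) μ₀` is a bijection
`A ≃ Q_χ`. Substituting `a ↦ a + c` in the Gauss sum of `χ(·, c) μ₀` gives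
`γ(χ(·, c) μ₀) = μ₀(c)⁻¹ γ(μ₀)`, so summing the `k`-th powers over `Q_χ` produces
`(∑_c μ₀(c)^{-k}) γ(μ₀)^k`.
-/

namespace QuadMaps

variable {A : Type*} [AddCommGroup A] [Fintype A] {χ : A → A → ℂ} {μ ν : A → ℂ}

theorem apply_ne_zero (hμ : μ ∈ QuadMaps χ) (a : A) : μ a ≠ 0 :=
  norm_ne_zero_iff.mp (by rw [hμ.1 a]; exact one_ne_zero)

theorem twist_mem (hχ : IsBicharacter χ) (hμ : μ ∈ QuadMaps χ) (c : A) :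
    (fun a => χ a c * μ a) ∈ QuadMaps χ := by
  refine ⟨fun a => by simp [hχ.1, hμ.1], fun a b => ?_⟩
  simp only [hχ.2.2.1, hμ.2]
  ring

theorem twist_injective (hχ : IsBicharacter χ) (hμ : μ ∈ QuadMaps χ) :
    Function.Injective fun c a => χ a c * μ a := by
  intro c c' h
  apply hχ.2.2.2.1
  funext a
  simpa [hχ.2.1 c a, hχ.2.1 c' a, apply_ne_zero hμ a] using congrFun h a

theorem div_map_add (hχ : IsBicharacter χ) (hμ : μ ∈ QuadMaps χ) (hν : ν ∈ QuadMaps χ)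
    (a b : A) : μ (a + b) / ν (a + b) = μ a / ν a * (μ b / ν b) := by
  have hχa : χ a b ≠ 0 := norm_ne_zero_iff.mp (by rw [hχ.1 a b]; exact one_ne_zero)
  rw [hμ.2, hν.2]
  field_simp [hχa, apply_ne_zero hν a, apply_ne_zero hν b]

theorem exists_eq_twist (hχ : IsBicharacter χ) (hμ : μ ∈ QuadMaps χ) (hν : ν ∈ QuadMaps χ) :
    ∃ c, ∀ a, μ a = χ a c * ν a := by
  obtain ⟨c, hc⟩ := hχ.2.2.2.2 (fun a => μ a / ν a)
    (fun a => by rw [norm_div, hμ.1, hν.1, div_one]) (div_map_add hχ hμ hν)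
  refine ⟨c, fun a => ?_⟩
  rw [hχ.2.1 a c, ← congrFun hc a, div_mul_cancel₀ _ (apply_ne_zero hν a)]

theorem eq_range_twist (hχ : IsBicharacter χ) (hμ : μ ∈ QuadMaps χ) :
    QuadMaps χ = Set.range fun c a => χ a c * μ a := by
  ext ν
  refine ⟨fun hν => ?_, ?_⟩
  · obtain ⟨c, hc⟩ := exists_eq_twist hχ hν hμ
    exact ⟨c, funext fun a => (hc a).symm⟩
  · rintro ⟨c, rfl⟩
    exact twist_mem hχ hμ c

theorem finsum_eq_sum_twist {M : Type*} [AddCommMonoid M] (hχ : IsBicharacter χ)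
    (hμ : μ ∈ QuadMaps χ) (f : (A → ℂ) → M) :
    ∑ᶠ ν ∈ QuadMaps χ, f ν = ∑ c, f fun a => χ a c * μ a := by
  rw [eq_range_twist hχ hμ, finsum_mem_range (twist_injective hχ hμ),
    finsum_eq_sum_of_fintype]

theorem sum_twist (hμ : μ ∈ QuadMaps χ) (c : A) :
    ∑ a, χ a c * μ a = (μ c)⁻¹ * ∑ a, μ a := by
  have hshift : ∑ a, μ (a + c) = ∑ a, μ a :=
    Fintype.sum_equiv (Equiv.addRight c) _ _ fun _ => rfl
  simp only [hμ.2, ← Finset.sum_mul] at hshift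
  rw [eq_inv_mul_iff_mul_eq₀ (apply_ne_zero hμ c), mul_comm, hshift]

end QuadMaps

/-- For a bicharacter pair `(A, χ)`, a fixed quadratic map `μ₀ ∈ Q_χ` and an
integer `k`: every `μ ∈ Q_χ` is `χ(·, c)·μ₀` for a unique `c ∈ A`, and
`ζ_k(χ) = γ(μ₀^{-k}) · γ(μ₀)^k`, where
`ζ_k(χ) = |A|^{-1/2}|A_k|^{-1/2} ∑_{μ ∈ Q_χ} γ(μ)^k`,
`γ(μ) = |A|^{-1/2} ∑_a μ a` for `μ ∈ Q_χ` (the annihilator of `χ` is trivial), and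
`γ(μ₀^{-k}) = |A|^{-1/2}|A_k|^{-1/2} ∑_a μ₀(a)^{-k}` (the annihilator of `χ^{-k}` is
`A_k = {a | k·a = 0}`). -/
theorem zeta_eq_gauss_product
    {A : Type*} [AddCommGroup A] [Fintype A]
    (χ : A → A → ℂ) (hχ : IsBicharacter χ)
    (μ₀ : A → ℂ) (hμ₀ : μ₀ ∈ QuadMaps χ) (k : ℤ) :
    (∀ μ ∈ QuadMaps χ, ∃! c : A, ∀ a, μ a = χ a c * μ₀ a) ∧
    ((Real.sqrt (Fintype.card A) : ℂ))⁻¹ *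
        ((Real.sqrt (Nat.card {a : A // k • a = 0}) : ℂ))⁻¹ *
        (∑ᶠ μ ∈ QuadMaps χ,
          (((Real.sqrt (Fintype.card A) : ℂ))⁻¹ * ∑ a : A, μ a) ^ k)
      = (((Real.sqrt (Fintype.card A) : ℂ))⁻¹ *
          ((Real.sqrt (Nat.card {a : A // k • a = 0}) : ℂ))⁻¹ *
          ∑ a : A, (μ₀ a) ^ (-k)) *
        (((Real.sqrt (Fintype.card A) : ℂ))⁻¹ * ∑ a : A, μ₀ a) ^ k := by
  refine ⟨fun μ hμ => ?_, ?_⟩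
  · obtain ⟨c, hc⟩ := QuadMaps.exists_eq_twist hχ hμ hμ₀
    exact ⟨c, hc, fun c' hc' =>
      QuadMaps.twist_injective hχ hμ₀ (funext fun a => (hc' a).symm.trans (hc a))⟩
  · have hterm (c : A) : (((Real.sqrt (Fintype.card A) : ℂ))⁻¹ * ∑ a, χ a c * μ₀ a) ^ k
        = μ₀ c ^ (-k) * (((Real.sqrt (Fintype.card A) : ℂ))⁻¹ * ∑ a, μ₀ a) ^ k := by
      rw [QuadMaps.sum_twist hμ₀ c, mul_left_comm, mul_zpow, inv_zpow', zpow_neg]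
    simp only [QuadMaps.finsum_eq_sum_twist hχ hμ₀, hterm, ← Finset.sum_mul]
    ring
end

section
/- Let (A, χ) be a bicharacter pair. Then ζ₁(χ) = 1, where ζ₁(χ) = |A|^{-1} ∑_{μ ∈ Q_χ} γ(μ) (note A₁ = {0}). -/
/-- The normalized Gauss sum `γ(μ) = |A|^{-1/2} ∑_a μ a` of a quadratic map associated
with a non-degenerate form (whose annihilator is trivial). -/
noncomputable def gaussSum' {A : Type*} [AddCommGroup A] [Fintype A] (μ : A → ℂ) : ℂ :=
  ((Real.sqrt (Fintype.card A) : ℂ))⁻¹ * ∑ a : A, μ a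

/-- `ζ_k(χ) = |A|^{-1/2} |A_k|^{-1/2} ∑_{μ ∈ Q_χ} γ(μ)^k`, where `A_k = {a | k·a = 0}`. -/
noncomputable def zeta {A : Type*} [AddCommGroup A] [Fintype A]
    (χ : A → A → ℂ) (k : ℕ) : ℂ :=
  ((Real.sqrt (Fintype.card A) : ℂ))⁻¹ *
    ((Real.sqrt (Nat.card {a : A // k • a = 0}) : ℂ))⁻¹ *
    ∑ᶠ μ ∈ QuadMaps χ, (gaussSum' μ) ^ k

/-!
The quadratic maps associated with `χ` form a torsor under the characters `χ c`, by
non-degeneracy. The torsor is nonempty because `S¹` is divisible, hence an injective `ℤ`-module,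
so the central extension of `A` by `S¹` with cocycle `χ` splits. Fixing `μ₀ ∈ Q_χ`,
orthogonality of characters gives `∑_{μ ∈ Q_χ} ∑_a μ a = ∑_a μ₀ a ∑_c χ c a = |A| μ₀ 0 = |A|`,
so `ζ₁(χ) = |A|^{-1/2} · |A|^{-1/2} · |A| = 1`.
-/

section QuadraticRefinement

variable {A G : Type*} [AddCommGroup A] [CommGroup G]

theorem eq_one_of_map_add_left {c : A → A → G} (hadd : ∀ a b d, c (a + b) d = c a d * c b d)
    (b : A) : c 0 b = 1 :=
  left_eq_mul.1 (by rw [← hadd, add_zero] : c 0 b = c 0 b * c 0 b)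

abbrev centralExtension (c : A → A → G) (hsymm : ∀ a b, c a b = c b a)
    (hadd : ∀ a b d, c (a + b) d = c a d * c b d) : CommGroup (A × G) where
  mul x y := (x.1 + y.1, c x.1 y.1 * x.2 * y.2)
  one := (0, 1)
  inv x := (-x.1, (c x.1 (-x.1))⁻¹ * x.2⁻¹)
  mul_assoc x y z := by
    refine Prod.ext (add_assoc _ _ _) ?_
    show c (x.1 + y.1) z.1 * (c x.1 y.1 * x.2 * y.2) * z.2
      = c x.1 (y.1 + z.1) * x.2 * (c y.1 z.1 * y.2 * z.2)
    rw [hadd, hsymm x.1 (y.1 + z.1), hadd, hsymm y.1 x.1, hsymm z.1 x.1]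
    ac_rfl
  one_mul x := Prod.ext (zero_add _) <| by
    show c 0 x.1 * 1 * x.2 = x.2
    rw [eq_one_of_map_add_left hadd, one_mul, one_mul]
  mul_one x := Prod.ext (add_zero _) <| by
    show c x.1 0 * x.2 * 1 = x.2
    rw [hsymm, eq_one_of_map_add_left hadd, one_mul, mul_one]
  inv_mul_cancel x := Prod.ext (neg_add_cancel _) <| by
    show c (-x.1) x.1 * ((c x.1 (-x.1))⁻¹ * x.2⁻¹) * x.2 = 1
    rw [hsymm]
    group
  mul_comm x y := Prod.ext (add_comm _ _) <| by
    show c x.1 y.1 * x.2 * y.2 = c y.1 x.1 * y.2 * x.2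
    rw [hsymm, mul_right_comm]

theorem Module.Baer.exists_monoidHom_leftInverse {E : Type*} [CommGroup E]
    (hG : Module.Baer ℤ (Additive G)) (ι : G →* E) (hι : Function.Injective ι) :
    ∃ r : E →* G, Function.LeftInverse r ι := by
  obtain ⟨r, hr⟩ := hG.extension_property_addMonoidHom (MonoidHom.toAdditive ι) hι
    (AddMonoidHom.id _)
  exact ⟨MonoidHom.toAdditive.symm r, fun s => DFunLike.congr_fun hr (Additive.ofMul s)⟩

/-- A retraction `r` of `G → A × G` splits the central extension, and `μ a = (r (a, 1))⁻¹`. -/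
theorem exists_quadratic_refinement (hG : Module.Baer ℤ (Additive G)) (c : A → A → G)
    (hsymm : ∀ a b, c a b = c b a) (hadd : ∀ a b d, c (a + b) d = c a d * c b d) :
    ∃ μ : A → G, ∀ a b, μ (a + b) = c a b * μ a * μ b := by
  let _ := centralExtension c hsymm hadd
  let ι : G →* A × G :=
    { toFun := fun s => (0, s)
      map_one' := rfl
      map_mul' := fun s t => Prod.ext (add_zero 0).symm <| by
        show s * t = c 0 0 * s * t
        rw [eq_one_of_map_add_left hadd, one_mul] }
  obtain ⟨r, hr⟩ := hG.exists_monoidHom_leftInverse ι fun s t h => congrArg Prod.snd h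
  refine ⟨fun a => (r (a, 1))⁻¹, fun a b => ?_⟩
  have hsplit : ((a, 1) * (b, 1) : A × G) = (a + b, 1) * ι (c a b) := by
    refine Prod.ext (add_zero _).symm ?_
    show c a b * 1 * 1 = c (a + b) 0 * 1 * c a b
    rw [hsymm (a + b), eq_one_of_map_add_left hadd, mul_one, mul_one, one_mul, one_mul]
  have h := congrArg r hsplit
  rw [map_mul, map_mul, hr] at h
  show (r (a + b, 1))⁻¹ = c a b * (r (a, 1))⁻¹ * (r (b, 1))⁻¹
  rw [eq_mul_inv_of_mul_eq h.symm]
  simp only [mul_inv, inv_inv]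
  ac_rfl

end QuadraticRefinement

theorem Circle.baer : Module.Baer ℤ (Additive Circle) :=
  letI : DivisibleBy (Additive Circle) ℤ :=
    Circle.exp_surjective.divisibleBy Circle.expHom fun x n => map_zsmul Circle.expHom n x
  Module.Baer.of_divisible _

section QuadMaps

variable {A : Type*} [AddCommGroup A] [Fintype A] {χ : A → A → ℂ} {μ : A → ℂ}

theorem ne_zero_of_mem_quadMaps (hμ : μ ∈ QuadMaps χ) (a : A) : μ a ≠ 0 :=
  norm_ne_zero_iff.1 (by rw [hμ.1 a]; exact one_ne_zero)

theorem apply_zero_of_mem_quadMaps (hμ : μ ∈ QuadMaps χ) (hχ : χ 0 0 = 1) : μ 0 = 1 :=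
  (left_eq_mul₀ (ne_zero_of_mem_quadMaps hμ 0)).1 <| by simpa [hχ] using hμ.2 0 0

end QuadMaps

namespace IsBicharacter

variable {A : Type*} [AddCommGroup A] [Fintype A] {χ : A → A → ℂ}

theorem ne_zero (hχ : IsBicharacter χ) (a b : A) : χ a b ≠ 0 :=
  norm_ne_zero_iff.1 (by rw [hχ.1 a b]; exact one_ne_zero)

theorem map_zero_left (hχ : IsBicharacter χ) (b : A) : χ 0 b = 1 :=
  (left_eq_mul₀ (hχ.ne_zero 0 b)).1 (by rw [← hχ.2.2.1, add_zero])

def addCharLeft (hχ : IsBicharacter χ) (a : A) : AddChar A ℂ where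
  toFun c := χ c a
  map_zero_eq_one' := hχ.map_zero_left a
  map_add_eq_mul' b c := hχ.2.2.1 b c a

@[simp]
theorem addCharLeft_apply (hχ : IsBicharacter χ) (a c : A) : hχ.addCharLeft a c = χ c a := rfl

theorem addCharLeft_eq_zero_iff (hχ : IsBicharacter χ) {a : A} :
    hχ.addCharLeft a = 0 ↔ a = 0 := by
  simp only [AddChar.eq_zero_iff, addCharLeft_apply]
  refine ⟨fun h => hχ.2.2.2.1 (funext fun b => ?_), fun h c => ?_⟩
  · show χ a b = χ 0 b
    rw [hχ.2.1, hχ.map_zero_left, h]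
  · rw [h, hχ.2.1, hχ.map_zero_left]

theorem sum_apply_left_eq_ite [DecidableEq A] (hχ : IsBicharacter χ) (a : A) :
    ∑ c, χ c a = if a = 0 then (Fintype.card A : ℂ) else 0 := by
  simpa only [hχ.addCharLeft_eq_zero_iff, addCharLeft_apply] using
    AddChar.sum_eq_ite (hχ.addCharLeft a)

theorem quadMaps_nonempty (hχ : IsBicharacter χ) : (QuadMaps χ).Nonempty := by
  let χ' : A → A → Circle := fun a b => ⟨χ a b, mem_sphere_zero_iff_norm.2 (hχ.1 a b)⟩
  obtain ⟨μ, hμ⟩ := exists_quadratic_refinement Circle.baer χ'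
    (fun a b => Circle.ext (hχ.2.1 a b)) (fun a b c => Circle.ext (hχ.2.2.1 a b c))
  exact ⟨fun a => μ a, fun a => Circle.norm_coe _, fun a b => congrArg Subtype.val (hμ a b)⟩

theorem quadMaps_eq_range (hχ : IsBicharacter χ) {μ₀ : A → ℂ} (hμ₀ : μ₀ ∈ QuadMaps χ) :
    QuadMaps χ = Set.range fun c a => χ c a * μ₀ a := by
  ext μ
  constructor
  · intro hμ
    -- `μ / μ₀` is a character, hence equal to some `χ c` by non-degeneracy
    obtain ⟨c, hc⟩ := hχ.2.2.2.2 (fun a => μ a / μ₀ a)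
      (fun a => by rw [norm_div, hμ.1, hμ₀.1, div_one])
      (fun a b => by
        rw [hμ.2, hμ₀.2]
        field_simp [hχ.ne_zero a b, ne_zero_of_mem_quadMaps hμ₀ a, ne_zero_of_mem_quadMaps hμ₀ b])
    refine ⟨c, funext fun a => ?_⟩
    dsimp only
    rw [← congrFun hc a, div_mul_cancel₀ _ (ne_zero_of_mem_quadMaps hμ₀ a)]
  · rintro ⟨c, rfl⟩
    refine ⟨fun a => by rw [norm_mul, hχ.1, hμ₀.1, one_mul], fun a b => ?_⟩
    dsimp only
    rw [hχ.2.1 c, hχ.2.2.1, hχ.2.1 a, hχ.2.1 b, hμ₀.2]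
    ring

theorem injective_mul_quadMap (hχ : IsBicharacter χ) {μ₀ : A → ℂ} (hμ₀ : μ₀ ∈ QuadMaps χ) :
    Function.Injective fun c a => χ c a * μ₀ a := fun _ _ h =>
  hχ.2.2.2.1 <| funext fun a => mul_right_cancel₀ (ne_zero_of_mem_quadMaps hμ₀ a) (congrFun h a)

theorem finsum_gaussSum' (hχ : IsBicharacter χ) :
    ∑ᶠ μ ∈ QuadMaps χ, gaussSum' μ = Real.sqrt (Fintype.card A) := by
  classical
  obtain ⟨μ₀, hμ₀⟩ := hχ.quadMaps_nonempty
  have hsum : ∑ c, ∑ a, χ c a * μ₀ a = Fintype.card A := by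
    simp only [Finset.sum_comm (γ := A), ← Finset.sum_mul, hχ.sum_apply_left_eq_ite, ite_mul,
      zero_mul, Finset.sum_ite_eq', Finset.mem_univ, if_true,
      apply_zero_of_mem_quadMaps hμ₀ (hχ.map_zero_left 0), mul_one]
  rw [hχ.quadMaps_eq_range hμ₀, finsum_mem_range (hχ.injective_mul_quadMap hμ₀),
    finsum_eq_sum_of_fintype]
  simp only [gaussSum', ← Finset.mul_sum, hsum]
  have hA : (0 : ℝ) < Fintype.card A := by exact_mod_cast Fintype.card_pos
  rw [inv_mul_eq_iff_eq_mul₀ (by exact_mod_cast (Real.sqrt_pos.2 hA).ne'), ← Complex.ofReal_mul,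
    Real.mul_self_sqrt hA.le, Complex.ofReal_natCast]

end IsBicharacter

/-- For a bicharacter pair `(A, χ)`, `ζ₁(χ) = 1` (note `A₁ = {0}`). -/
theorem zeta_one_eq_one
    {A : Type*} [AddCommGroup A] [Fintype A]
    (χ : A → A → ℂ) (hχ : IsBicharacter χ) :
    zeta χ 1 = 1 := by
  have hA : Nat.card {a : A // (1 : ℕ) • a = 0} = 1 := by simp
  rw [zeta, hA]
  simp [hχ.finsum_gaussSum']
end

section
/- For the Tambara–Yamagami category C = TY(A, χ, ν) with n = |A|, whose Drinfeld center Z(C) has as simple objects (1) 2n invertible objects X_{(a,ε)} with dim 1 and twist χ(a,a)^{-1}, indexed by a ∈ A and ε a square root of χ(a,a)^{-1}; (2) n(n−1)/2 objects Y_{(a,b)} with dim 2 and twist χ(a,b)^{-1}, indexed by unordered pairs a ≠ b in A; (3) 2n objects Z_{(μ,Δ)} with dim n^{1/2} and twist Δ, indexed by μ ∈ Q_χ and Δ a square root of ν·γ(μ), the sum τ_k = ∑_i θ_i^k (dim i)² over the simple objects of Z(C) satisfies τ_k = 2n|A_k| if k is odd, and τ_k = 2n(|A_k| + ν^{k/2}|A|^{1/2}|A_{k/2}|^{1/2}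 ζ_{k/2}(χ)) if k is even. -/
/-- The sum `τ_k = ∑_i θ_i^k (dim i)²` over the simple objects of the Drinfeld center of
the Tambara–Yamagami category `TY(A, χ, ν)`: it reduces to
`τ_k = 2·∑_{a,b∈A} χ(a,b)^{-k} + n·∑_{(μ,Δ)} Δ^k`, where the first sum accounts for the
`2n` invertible objects `X_{(a,ε)}` (dim 1, twist `χ(a,a)^{-1}`) and the `n(n-1)/2`
objects `Y_{(a,b)}` (dim 2, twist `χ(a,b)^{-1}`), and the second for the `2n` objects
`Z_{(μ,Δ)}` (dim `n^{1/2}`, twist `Δ`) indexed by `μ ∈ Q_χ` and square roots `Δ` of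
`ν·γ(μ)`. -/
noncomputable def tyTau {A : Type*} [AddCommGroup A] [Fintype A]
    (χ : A → A → ℂ) (ν : ℂ) (k : ℕ) : ℂ :=
  2 * (∑ a : A, ∑ b : A, (χ a b) ^ (-(k : ℤ))) +
    (Fintype.card A : ℂ) *
      ∑ᶠ q ∈ {q : (A → ℂ) × ℂ | q.1 ∈ QuadMaps χ ∧ q.2 ^ 2 = ν * gaussSum' q.1},
        q.2 ^ k

section Aux

variable {A : Type*} [AddCommGroup A] [Fintype A] {χ : A → A → ℂ}

open scoped Classical

lemma chi_ne_zero (hχ : IsBicharacter χ) (a b : A) : χ a b ≠ 0 := by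
  intro h
  have h1 := hχ.1 a b
  rw [h] at h1
  simp at h1

lemma chi_zero_left (hχ : IsBicharacter χ) (b : A) : χ 0 b = 1 := by
  have h := hχ.2.2.1 0 0 b
  rw [zero_add] at h
  have h2 : χ 0 b * 1 = χ 0 b * χ 0 b := by rw [mul_one]; exact h
  exact (mul_left_cancel₀ (chi_ne_zero hχ 0 b) h2).symm

lemma chi_nsmul (hχ : IsBicharacter χ) (k : ℕ) (a b : A) : χ (k • a) b = χ a b ^ k := by
  induction k with
  | zero => simpa using chi_zero_left hχ b
  | succ k ih => rw [succ_nsmul, hχ.2.2.1, ih, pow_succ]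

lemma chi_neg (hχ : IsBicharacter χ) (a b : A) : χ (-a) b = (χ a b)⁻¹ := by
  have h : χ (-a) b * χ a b = 1 := by
    rw [← hχ.2.2.1, neg_add_cancel, chi_zero_left hχ]
  exact eq_inv_of_mul_eq_one_left h

lemma chi_sum (hχ : IsBicharacter χ) (c : A) :
    ∑ b : A, χ c b = if c = 0 then (Fintype.card A : ℂ) else 0 := by
  classical
  split_ifs with hc
  · subst hc
    simp [chi_zero_left hχ]
  · obtain ⟨b₀, hb₀⟩ : ∃ b₀, χ c b₀ ≠ 1 := by
      by_contra h
      push_neg at h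
      exact hc (hχ.2.2.2.1 (funext fun b => by show χ c b = χ 0 b; rw [h b, chi_zero_left hχ]))
    have key : (∑ b : A, χ c b) * χ c b₀ = ∑ b : A, χ c b := by
      rw [Finset.sum_mul]
      calc ∑ b : A, χ c b * χ c b₀ = ∑ b : A, χ c (b + b₀) := by
            refine Finset.sum_congr rfl fun b _ => ?_
            rw [hχ.2.1 c (b + b₀), hχ.2.2.1, hχ.2.1 b c, hχ.2.1 b₀ c]
        _ = ∑ b : A, χ c b := Equiv.sum_comp (Equiv.addRight b₀) (fun b => χ c b)
    have h0 : (χ c b₀ - 1) * (∑ b : A, χ c b) = 0 := by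
      rw [sub_mul, one_mul, mul_comm, key, sub_self]
    rcases mul_eq_zero.1 h0 with h | h
    · exact absurd (sub_eq_zero.1 h) hb₀
    · exact h

lemma tau_first (hχ : IsBicharacter χ) (k : ℕ) :
    ∑ a : A, ∑ b : A, (χ a b) ^ (-(k : ℤ)) =
      (Fintype.card A : ℂ) * (Nat.card {a : A // k • a = 0} : ℂ) := by
  classical
  have h1 : ∀ a : A, ∑ b : A, (χ a b) ^ (-(k : ℤ)) =
      if k • a = 0 then (Fintype.card A : ℂ) else 0 := by
    intro a
    have : ∀ b : A, (χ a b) ^ (-(k : ℤ)) = χ (-(k • a)) b := by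
      intro b
      rw [chi_neg hχ, chi_nsmul hχ, zpow_neg, zpow_natCast]
    rw [Finset.sum_congr rfl fun b _ => this b, chi_sum hχ]
    simp only [neg_eq_zero]
  rw [Finset.sum_congr rfl fun a _ => h1 a, Finset.sum_ite, Finset.sum_const,
    Finset.sum_const_zero, add_zero, nsmul_eq_mul]
  rw [Nat.card_eq_fintype_card, Fintype.card_subtype, mul_comm]

lemma quad_ne_zero {μ : A → ℂ} (hμ : μ ∈ QuadMaps χ) (a : A) : μ a ≠ 0 := by
  intro h
  have h1 := hμ.1 a
  rw [h] at h1
  simp at h1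

lemma quad_zero (hχ : IsBicharacter χ) {μ : A → ℂ} (hμ : μ ∈ QuadMaps χ) : μ 0 = 1 := by
  have h := hμ.2 0 0
  rw [add_zero, chi_zero_left hχ, one_mul] at h
  have h2 : μ 0 * 1 = μ 0 * μ 0 := by rw [mul_one]; exact h
  exact (mul_left_cancel₀ (quad_ne_zero hμ 0) h2).symm

lemma quad_mul_conj {μ : A → ℂ} (hμ : μ ∈ QuadMaps χ) (a : A) :
    μ a * (starRingEnd ℂ) (μ a) = 1 := by
  rw [Complex.mul_conj, Complex.normSq_eq_norm_sq, hμ.1 a]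
  norm_num

lemma gauss_conj (hχ : IsBicharacter χ) {μ : A → ℂ} (hμ : μ ∈ QuadMaps χ) :
    (∑ a : A, μ a) * (starRingEnd ℂ) (∑ a : A, μ a) = (Fintype.card A : ℂ) := by
  classical
  rw [map_sum, Finset.mul_sum]
  calc ∑ b : A, (∑ a : A, μ a) * (starRingEnd ℂ) (μ b)
      = ∑ b : A, ∑ c : A, χ b c * μ c := by
        refine Finset.sum_congr rfl fun b _ => ?_
        rw [Finset.sum_mul]
        rw [← Equiv.sum_comp (Equiv.addLeft b) (fun a => μ a * (starRingEnd ℂ) (μ b))]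
        refine Finset.sum_congr rfl fun c _ => ?_
        show μ (b + c) * (starRingEnd ℂ) (μ b) = χ b c * μ c
        rw [hμ.2 b c]
        calc χ b c * μ b * μ c * (starRingEnd ℂ) (μ b)
            = χ b c * μ c * (μ b * (starRingEnd ℂ) (μ b)) := by ring
          _ = χ b c * μ c := by rw [quad_mul_conj hμ, mul_one]
    _ = ∑ c : A, (∑ b : A, χ b c) * μ c := by
        rw [Finset.sum_comm]
        exact Finset.sum_congr rfl fun c _ => (Finset.sum_mul ..).symm
    _ = (Fintype.card A : ℂ) := by
        have h : ∀ c : A, (∑ b : A, χ b c) = if c = 0 then (Fintype.card A : ℂ) else 0 := by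
          intro c
          rw [Finset.sum_congr rfl fun b _ => hχ.2.1 b c, chi_sum hχ]
        simp only [h, ite_mul, zero_mul]
        rw [Finset.sum_ite_eq' Finset.univ (0 : A) (fun c => (Fintype.card A : ℂ) * μ c)]
        simp [quad_zero hχ hμ]

lemma gauss_ne_zero (hχ : IsBicharacter χ) {μ : A → ℂ} (hμ : μ ∈ QuadMaps χ) :
    gaussSum' μ ≠ 0 := by
  have hA : (0 : ℝ) < Fintype.card A := by exact_mod_cast Fintype.card_pos
  have hsum : (∑ a : A, μ a) ≠ 0 := by
    intro h
    have hc := gauss_conj hχ hμ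
    rw [h, zero_mul] at hc
    have : (Fintype.card A : ℂ) ≠ 0 := by exact_mod_cast Fintype.card_pos.ne'
    exact this hc.symm
  unfold gaussSum'
  refine mul_ne_zero (inv_ne_zero ?_) hsum
  exact_mod_cast (Real.sqrt_pos.mpr hA).ne'

lemma quad_nsmul (hχ : IsBicharacter χ) {μ : A → ℂ} (hμ : μ ∈ QuadMaps χ) (a : A) (k : ℕ) :
    μ (k • a) = χ a a ^ (k.choose 2) * μ a ^ k := by
  induction k with
  | zero => simp [quad_zero hχ hμ]
  | succ k ih =>
    rw [succ_nsmul, hμ.2, ih, chi_nsmul hχ,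
      show (k + 1).choose 2 = k.choose 2 + k by
        have := Nat.choose_succ_succ k 1
        simp [Nat.choose_one_right] at this
        omega,
      pow_add, pow_succ]
    ring

lemma quadMaps_finite (hχ : IsBicharacter χ) : (QuadMaps χ).Finite := by
  classical
  have hn : 0 < Fintype.card A := Fintype.card_pos
  refine Set.Finite.subset (Set.Finite.pi (t := fun a : A =>
    {z : ℂ | z ^ Fintype.card A = (χ a a ^ ((Fintype.card A).choose 2))⁻¹}) ?_) ?_
  · intro a
    refine Set.Finite.subset
      ((Polynomial.nthRoots (Fintype.card A)
        ((χ a a ^ ((Fintype.card A).choose 2))⁻¹ : ℂ)).toFinset : Finset ℂ).finite_toSet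
      fun z hz => ?_
    exact Multiset.mem_toFinset.mpr ((Polynomial.mem_nthRoots hn).mpr hz)
  · intro μ hμ
    rw [Set.mem_univ_pi]
    intro a
    have h := quad_nsmul hχ hμ a (Fintype.card A)
    rw [card_nsmul_eq_zero, quad_zero hχ hμ] at h
    have h2 : μ a ^ Fintype.card A * χ a a ^ ((Fintype.card A).choose 2) = 1 := by
      rw [mul_comm]; exact h.symm
    exact eq_inv_of_mul_eq_one_left h2

lemma tau_second_odd (hχ : IsBicharacter χ) (ν : ℂ) {k : ℕ} (hk : Odd k) :
    ∑ᶠ q ∈ {q : (A → ℂ) × ℂ | q.1 ∈ QuadMaps χ ∧ q.2 ^ 2 = ν * gaussSum' q.1},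
      q.2 ^ k = 0 := by
  classical
  set S : Set ((A → ℂ) × ℂ) :=
    {q | q.1 ∈ QuadMaps χ ∧ q.2 ^ 2 = ν * gaussSum' q.1} with hSdef
  have hex : ∀ μ : A → ℂ, ∃ z : ℂ, z ^ 2 = ν * gaussSum' μ := fun μ =>
    IsAlgClosed.exists_pow_nat_eq _ (by norm_num)
  choose δ hδ using hex
  have hS : S.Finite := by
    refine Set.Finite.subset (((quadMaps_finite hχ).image (fun μ => (μ, δ μ))).union
      ((quadMaps_finite hχ).image (fun μ => (μ, -δ μ)))) ?_
    rintro ⟨μ, Δ⟩ ⟨h1, h2⟩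
    have heq : Δ ^ 2 = (δ μ) ^ 2 := by rw [h2, hδ]
    rcases sq_eq_sq_iff_eq_or_eq_neg.mp heq with h | h
    · exact Or.inl ⟨μ, h1, by rw [h]⟩
    · exact Or.inr ⟨μ, h1, by rw [h]⟩
  rw [finsum_mem_eq_finite_toFinset_sum _ hS]
  refine Finset.sum_involution (fun q _ => (q.1, -q.2)) ?_ ?_ ?_ ?_
  · intro q hq
    show q.2 ^ k + (-q.2) ^ k = 0
    rw [Odd.neg_pow hk]; ring
  · intro q hq hfq h
    apply hfq
    have h2 : -q.2 = q.2 := congrArg Prod.snd h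
    have h3 : q.2 = 0 := by
      have : q.2 + q.2 = 0 := by linear_combination -h2
      have h4 : (2 : ℂ) * q.2 = 0 := by linear_combination this
      rcases mul_eq_zero.1 h4 with h | h
      · norm_num at h
      · exact h
    rw [h3]
    exact zero_pow hk.pos.ne'
  · intro q hq
    rw [hS.mem_toFinset] at hq ⊢
    exact ⟨hq.1, by rw [neg_sq]; exact hq.2⟩
  · intro q hq
    simp

lemma tau_second_even (hχ : IsBicharacter χ) {ν : ℂ} (hν0 : ν ≠ 0) (m : ℕ) :
    ∑ᶠ q ∈ {q : (A → ℂ) × ℂ | q.1 ∈ QuadMaps χ ∧ q.2 ^ 2 = ν * gaussSum' q.1},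
      q.2 ^ (2 * m) = 2 * ν ^ m * ∑ᶠ μ ∈ QuadMaps χ, (gaussSum' μ) ^ m := by
  classical
  set S : Set ((A → ℂ) × ℂ) :=
    {q | q.1 ∈ QuadMaps χ ∧ q.2 ^ 2 = ν * gaussSum' q.1} with hSdef
  have hex : ∀ μ : A → ℂ, ∃ z : ℂ, z ^ 2 = ν * gaussSum' μ := fun μ =>
    IsAlgClosed.exists_pow_nat_eq _ (by norm_num)
  choose δ hδ using hex
  have hδne : ∀ μ ∈ QuadMaps χ, δ μ ≠ 0 := by
    intro μ hμ h
    have h1 := hδ μ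
    rw [h] at h1
    have : (0 : ℂ) = ν * gaussSum' μ := by simpa using h1
    exact (mul_ne_zero hν0 (gauss_ne_zero hχ hμ)) this.symm
  have hQ := quadMaps_finite hχ
  have hSeq : S = (fun μ => (μ, δ μ)) '' QuadMaps χ ∪ (fun μ => (μ, -δ μ)) '' QuadMaps χ := by
    ext q
    constructor
    · rintro ⟨h1, h2⟩
      have heq : q.2 ^ 2 = (δ q.1) ^ 2 := by rw [h2, hδ]
      rcases sq_eq_sq_iff_eq_or_eq_neg.mp heq with h | h
      · exact Or.inl ⟨q.1, h1, Prod.ext rfl h.symm⟩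
      · exact Or.inr ⟨q.1, h1, Prod.ext rfl (by rw [h])⟩
    · rintro (⟨μ', hμ', rfl⟩ | ⟨μ', hμ', rfl⟩)
      · exact ⟨hμ', hδ μ'⟩
      · exact ⟨hμ', by rw [neg_sq]; exact hδ μ'⟩
  have hdisj : Disjoint ((fun μ => (μ, δ μ)) '' QuadMaps χ)
      ((fun μ => (μ, -δ μ)) '' QuadMaps χ) := by
    rw [Set.disjoint_left]
    rintro q ⟨μ, hμ, rfl⟩ ⟨μ', hμ', hq⟩
    have h1 : μ' = μ := congrArg Prod.fst hq
    subst h1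
    have h2 : -δ μ' = δ μ' := congrArg Prod.snd hq
    have h3 : δ μ' = 0 := by linear_combination - h2 / 2
    exact hδne μ' hμ' h3
  rw [hSeq, finsum_mem_union hdisj (hQ.image _) (hQ.image _),
    finsum_mem_image (fun x _ y _ h => congrArg Prod.fst h),
    finsum_mem_image (fun x _ y _ h => congrArg Prod.fst h)]
  have e1 : ∀ μ ∈ QuadMaps χ, ((μ, δ μ) : (A → ℂ) × ℂ).2 ^ (2 * m)
      = ν ^ m * gaussSum' μ ^ m := by
    intro μ _
    show (δ μ) ^ (2 * m) = _
    rw [pow_mul, hδ, mul_pow]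
  have e2 : ∀ μ ∈ QuadMaps χ, ((μ, -δ μ) : (A → ℂ) × ℂ).2 ^ (2 * m)
      = ν ^ m * gaussSum' μ ^ m := by
    intro μ _
    show (-δ μ) ^ (2 * m) = _
    rw [Even.neg_pow ⟨m, by ring⟩, pow_mul, hδ, mul_pow]
  rw [finsum_mem_congr rfl e1, finsum_mem_congr rfl e2,
    finsum_mem_eq_finite_toFinset_sum _ hQ, finsum_mem_eq_finite_toFinset_sum _ hQ,
    ← Finset.mul_sum]
  ring

end Aux

/-- For the Tambara–Yamagami category `TY(A, χ, ν)` with `n = |A|`,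
`τ_k = 2n|A_k|` if `k` is odd and
`τ_k = 2n(|A_k| + ν^{k/2} |A|^{1/2} |A_{k/2}|^{1/2} ζ_{k/2}(χ))` if `k` is even. -/
theorem tyTau_formula
    {A : Type*} [AddCommGroup A] [Fintype A]
    (χ : A → A → ℂ) (hχ : IsBicharacter χ)
    (ν : ℂ) (hν : ν = 1 ∨ ν = -1) :
    (∀ k : ℕ, Odd k →
      tyTau χ ν k = 2 * (Fintype.card A : ℂ) * (Nat.card {a : A // k • a = 0} : ℂ)) ∧
    (∀ m : ℕ,
      tyTau χ ν (2 * m) = 2 * (Fintype.card A : ℂ) *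
        ((Nat.card {a : A // (2 * m) • a = 0} : ℂ) +
          ν ^ m * (Real.sqrt (Fintype.card A) : ℂ) *
            (Real.sqrt (Nat.card {a : A // m • a = 0}) : ℂ) * zeta χ m)) := by
  classical
  have hν0 : ν ≠ 0 := by rcases hν with h | h <;> simp [h]
  constructor
  · intro k hk
    unfold tyTau
    rw [tau_first hχ k, tau_second_odd hχ ν hk]
    ring
  · intro m
    unfold tyTau
    rw [tau_first hχ (2 * m), tau_second_even hχ hν0 m]
    unfold zeta
    have hs1 : (Real.sqrt (Fintype.card A) : ℂ) ≠ 0 := by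
      have : (0 : ℝ) < Real.sqrt (Fintype.card A) :=
        Real.sqrt_pos.mpr (by exact_mod_cast Fintype.card_pos)
      exact_mod_cast this.ne'
    have hs2 : (Real.sqrt (Nat.card {a : A // m • a = 0}) : ℂ) ≠ 0 := by
      have hpos : 0 < Nat.card {a : A // m • a = 0} := by
        rw [Nat.card_eq_fintype_card]
        exact @Fintype.card_pos _ _ ⟨⟨0, smul_zero m⟩⟩
      have : (0 : ℝ) < Real.sqrt (Nat.card {a : A // m • a = 0}) :=
        Real.sqrt_pos.mpr (by exact_mod_cast hpos)
      exact_mod_cast this.ne'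
    have h12 : ((Real.sqrt (Fintype.card A) : ℂ))⁻¹ *
        ((Real.sqrt (Nat.card {a : A // m • a = 0}) : ℂ))⁻¹ *
        (∑ᶠ μ ∈ QuadMaps χ, (gaussSum' μ) ^ m) *
        ((Real.sqrt (Fintype.card A) : ℂ) *
          (Real.sqrt (Nat.card {a : A // m • a = 0}) : ℂ)) =
        ∑ᶠ μ ∈ QuadMaps χ, (gaussSum' μ) ^ m := by
      field_simp
    linear_combination (-(2 : ℂ) * (Fintype.card A : ℂ) * ν ^ m) * h12
end
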